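/- arXiv:1508.07556 — 2 statements merged into one kernel-verified Lean document; each statement's English description precedes it below -/
import Mathlib

section
/- If u(x,t) solves the short-wave Degasperis–Procesi equation u_{xxt} - 3b u_x + 3 u_x u_{xx} + u u_{xxx} = 0, and q is defined by q^3 = -u_{xx} + b, then the quantity q satisfies the conservation law q_t + (u q)_x = 0. -/
/-- Partial derivative in the first (space) variable. -/
noncomputable def pdx (f : ℝ → ℝ → ℝ) : ℝ → ℝ → ℝ := fun x t => deriv (fun x' => f x' t) x

/-- Partial derivative in the second (time) variable. -/
noncomputable def pdt (f : ℝ → ℝ → ℝ) : ℝ → ℝ → ℝ := fun x t => deriv (fun t' => f x t') t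

lemma smooth_pdx {f : ℝ → ℝ → ℝ} (hf : ContDiff ℝ (⊤ : ℕ∞) (Function.uncurry f)) :
    ContDiff ℝ (⊤ : ℕ∞) (Function.uncurry (pdx f)) := by
  have h1 : ContDiff ℝ (⊤ : ℕ∞) (Function.uncurry fun (p : ℝ × ℝ) (x' : ℝ) => f x' p.2) :=
    hf.comp ((contDiff_snd).prodMk (contDiff_snd.comp contDiff_fst))
  have h2 : ContDiff ℝ (⊤ : ℕ∞) fun p : ℝ × ℝ =>
      fderiv ℝ (fun x' => f x' p.2) p.1 (1 : ℝ) :=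
    ContDiff.fderiv_apply h1 contDiff_fst contDiff_const (by simp)
  have : (Function.uncurry (pdx f)) = fun p : ℝ × ℝ =>
      fderiv ℝ (fun x' => f x' p.2) p.1 (1 : ℝ) := by
    funext p
    simp [Function.uncurry, pdx, fderiv_apply_one_eq_deriv]
  rw [this]; exact h2

lemma smooth_pdt {f : ℝ → ℝ → ℝ} (hf : ContDiff ℝ (⊤ : ℕ∞) (Function.uncurry f)) :
    ContDiff ℝ (⊤ : ℕ∞) (Function.uncurry (pdt f)) := by
  have h1 : ContDiff ℝ (⊤ : ℕ∞) (Function.uncurry fun (p : ℝ × ℝ) (t' : ℝ) => f p.1 t') :=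
    hf.comp ((contDiff_fst.comp contDiff_fst).prodMk contDiff_snd)
  have h2 : ContDiff ℝ (⊤ : ℕ∞) fun p : ℝ × ℝ =>
      fderiv ℝ (fun t' => f p.1 t') p.2 (1 : ℝ) :=
    ContDiff.fderiv_apply h1 contDiff_snd contDiff_const (by simp)
  have : (Function.uncurry (pdt f)) = fun p : ℝ × ℝ =>
      fderiv ℝ (fun t' => f p.1 t') p.2 (1 : ℝ) := by
    funext p
    simp [Function.uncurry, pdt, fderiv_apply_one_eq_deriv]
  rw [this]; exact h2

lemma hasDerivAt_slice_x {f : ℝ → ℝ → ℝ} (hf : ContDiff ℝ (⊤ : ℕ∞) (Function.uncurry f))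
    (x t : ℝ) : HasDerivAt (fun x' => f x' t) (pdx f x t) x := by
  have hd : DifferentiableAt ℝ (fun x' => f x' t) x := by
    have : (fun x' => f x' t) = Function.uncurry f ∘ (fun x' => (x', t)) := rfl
    rw [this]
    exact DifferentiableAt.comp x (hf.differentiable (by simp) (x, t))
      (differentiableAt_id.prodMk (differentiableAt_const t))
  simpa [pdx] using hd.hasDerivAt

lemma hasDerivAt_slice_t {f : ℝ → ℝ → ℝ} (hf : ContDiff ℝ (⊤ : ℕ∞) (Function.uncurry f))
    (x t : ℝ) : HasDerivAt (fun t' => f x t') (pdt f x t) t := by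
  have hd : DifferentiableAt ℝ (fun t' => f x t') t := by
    have : (fun t' => f x t') = Function.uncurry f ∘ (fun t' => (x, t')) := rfl
    rw [this]
    exact DifferentiableAt.comp t (hf.differentiable (by simp) (x, t))
      ((differentiableAt_const x).prodMk differentiableAt_id)
  simpa [pdt] using hd.hasDerivAt

/-- If `u` solves `u_{xxt} - 3b u_x + 3 u_x u_{xx} + u u_{xxx} = 0` and
`q = (-u_{xx} + b)^{1/3}`, then `q_t + (u q)_x = 0`. -/
theorem stmt_0 (b : ℝ) (u : ℝ → ℝ → ℝ)
    (hu : ContDiff ℝ (⊤ : ℕ∞) (Function.uncurry u))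
    (hpos : ∀ x t : ℝ, -pdx (pdx u) x t + b > 0)
    (q : ℝ → ℝ → ℝ)
    (hq : ∀ x t : ℝ, q x t = (-pdx (pdx u) x t + b) ^ ((1 : ℝ) / 3))
    (hpde : ∀ x t : ℝ,
      pdt (pdx (pdx u)) x t - 3 * b * pdx u x t
        + 3 * pdx u x t * pdx (pdx u) x t
        + u x t * pdx (pdx (pdx u)) x t = 0) :
    ∀ x t : ℝ, pdt q x t + pdx (fun x' t' => u x' t' * q x' t') x t = 0 := by
  intro x t
  set m : ℝ → ℝ → ℝ := fun x t => -pdx (pdx u) x t + b with hm_def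
  have hux : ContDiff ℝ (⊤ : ℕ∞) (Function.uncurry (pdx u)) := smooth_pdx hu
  have huxx : ContDiff ℝ (⊤ : ℕ∞) (Function.uncurry (pdx (pdx u))) := smooth_pdx hux
  have hm : ContDiff ℝ (⊤ : ℕ∞) (Function.uncurry m) := by
    have : Function.uncurry m = fun p : ℝ × ℝ => -(Function.uncurry (pdx (pdx u)) p) + b := rfl
    rw [this]
    exact huxx.neg.add contDiff_const
  have hM : m x t > 0 := hpos x t
  have hMne : m x t ≠ 0 := ne_of_gt hM
  -- derivative of m in t and x
  have hmt : HasDerivAt (fun t' => m x t') (pdt m x t) t := hasDerivAt_slice_t hm x t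
  have hmx : HasDerivAt (fun x' => m x' t) (pdx m x t) x := hasDerivAt_slice_x hm x t
  have hux_at : HasDerivAt (fun x' => u x' t) (pdx u x t) x := hasDerivAt_slice_x hu x t
  -- q as a concrete function
  have hqfun : ∀ x' t' : ℝ, q x' t' = (m x' t') ^ ((1:ℝ)/3) := fun x' t' => hq x' t'
  -- pdt q
  have hqt : HasDerivAt (fun t' => q x t')
      (pdt m x t * ((1:ℝ)/3) * (m x t) ^ ((1:ℝ)/3 - 1)) t := by
    have := hmt.rpow_const (p := (1:ℝ)/3) (Or.inl hMne)
    have heq : (fun t' => q x t') = fun t' => (m x t') ^ ((1:ℝ)/3) := by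
      funext t'; exact hqfun x t'
    rw [heq]; exact this
  have hqx : HasDerivAt (fun x' => q x' t)
      (pdx m x t * ((1:ℝ)/3) * (m x t) ^ ((1:ℝ)/3 - 1)) x := by
    have := hmx.rpow_const (p := (1:ℝ)/3) (Or.inl hMne)
    have heq : (fun x' => q x' t) = fun x' => (m x' t) ^ ((1:ℝ)/3) := by
      funext x'; exact hqfun x' t
    rw [heq]; exact this
  have huq : HasDerivAt (fun x' => u x' t * q x' t)
      (pdx u x t * q x t + u x t * (pdx m x t * ((1:ℝ)/3) * (m x t) ^ ((1:ℝ)/3 - 1))) x := by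
    have := hux_at.mul hqx
    exact this
  have e1 : pdt q x t = pdt m x t * ((1:ℝ)/3) * (m x t) ^ ((1:ℝ)/3 - 1) := by
    simp only [pdt]; exact hqt.deriv
  have e2 : pdx (fun x' t' => u x' t' * q x' t') x t
      = pdx u x t * q x t + u x t * (pdx m x t * ((1:ℝ)/3) * (m x t) ^ ((1:ℝ)/3 - 1)) := by
    simp only [pdx]; exact huq.deriv
  -- express pdt m and pdx m
  have hmt_eq : pdt m x t = -pdt (pdx (pdx u)) x t := by
    have h1 : HasDerivAt (fun t' => pdx (pdx u) x t') (pdt (pdx (pdx u)) x t) t :=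
      hasDerivAt_slice_t huxx x t
    have h2 : HasDerivAt (fun t' => m x t') (-pdt (pdx (pdx u)) x t) t := by
      exact ((h1.neg).add_const b)
    exact (hmt.unique h2)
  have hmx_eq : pdx m x t = -pdx (pdx (pdx u)) x t := by
    have h1 : HasDerivAt (fun x' => pdx (pdx u) x' t) (pdx (pdx (pdx u)) x t) x :=
      hasDerivAt_slice_x huxx x t
    have h2 : HasDerivAt (fun x' => m x' t) (-pdx (pdx (pdx u)) x t) x := by
      exact ((h1.neg).add_const b)
    exact (hmx.unique h2)
  -- PDE consequence: pdt m + u * pdx m = -3 * pdx u * m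
  have key : pdt m x t + u x t * pdx m x t = -3 * pdx u x t * m x t := by
    have hp := hpde x t
    rw [hmt_eq, hmx_eq]
    simp only [hm_def]
    nlinarith [hp]
  -- rpow arithmetic: m^(1/3-1) * m = m^(1/3)
  have hrw : (m x t) ^ ((1:ℝ)/3 - 1) * m x t = (m x t) ^ ((1:ℝ)/3) := by
    have h := Real.rpow_add hM ((1:ℝ)/3 - 1) 1
    rw [Real.rpow_one] at h
    rw [← h]; norm_num
  rw [e1, e2, hqfun x t]
  linear_combination ((1:ℝ)/3 * (m x t) ^ ((1:ℝ)/3 - 1)) * key - pdx u x t * hrw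
end

section
/- If ψ(x,t) satisfies the Lax pair ψ_{xxx} = λ(-u_{xx} + b)ψ and ψ_t = λ^{-1}ψ_{xx} - u ψ_x + u_x ψ for all λ ≠ 0 (with consistent cross-derivatives ψ_{xxxt} = ψ_{txxx}), then the compatibility condition forces u to satisfy u_{xxt} - 3b u_x + 3 u_x u_{xx} + u u_{xxx} = 0. -/
open Function

lemma csm_slice_x {f : ℝ → ℝ → ℝ} (hf : ContDiff ℝ (⊤ : ℕ∞) (uncurry f)) (t : ℝ) :
    ContDiff ℝ (⊤ : ℕ∞) (fun x => f x t) :=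
  hf.comp (contDiff_id.prodMk contDiff_const)

lemma csm_slice_t {f : ℝ → ℝ → ℝ} (hf : ContDiff ℝ (⊤ : ℕ∞) (uncurry f)) (x : ℝ) :
    ContDiff ℝ (⊤ : ℕ∞) (fun t => f x t) :=
  hf.comp (contDiff_const.prodMk contDiff_id)

lemma hasDerivAt_pdx {f : ℝ → ℝ → ℝ} (hf : ContDiff ℝ (⊤ : ℕ∞) (uncurry f)) (x t : ℝ) :
    HasDerivAt (fun x' => f x' t) (pdx f x t) x :=
  ((csm_slice_x hf t).differentiable (by simp) x).hasDerivAt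

lemma hasDerivAt_pdt {f : ℝ → ℝ → ℝ} (hf : ContDiff ℝ (⊤ : ℕ∞) (uncurry f)) (x t : ℝ) :
    HasDerivAt (fun t' => f x t') (pdt f x t) t :=
  ((csm_slice_t hf x).differentiable (by simp) t).hasDerivAt

lemma pdx_eq_fderiv {f : ℝ → ℝ → ℝ} (hf : ContDiff ℝ (⊤ : ℕ∞) (uncurry f)) (x t : ℝ) :
    pdx f x t = fderiv ℝ (uncurry f) (x, t) (1, 0) := by
  have hF := ((hf.differentiable (by simp)) (x, t)).hasFDerivAt
  have hι : HasDerivAt (fun x' : ℝ => ((x', t) : ℝ × ℝ)) (1, 0) x :=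
    (hasDerivAt_id x).prodMk (hasDerivAt_const x t)
  exact (hF.comp_hasDerivAt x hι).deriv

lemma pdt_eq_fderiv {f : ℝ → ℝ → ℝ} (hf : ContDiff ℝ (⊤ : ℕ∞) (uncurry f)) (x t : ℝ) :
    pdt f x t = fderiv ℝ (uncurry f) (x, t) (0, 1) := by
  have hF := ((hf.differentiable (by simp)) (x, t)).hasFDerivAt
  have hι : HasDerivAt (fun t' : ℝ => ((x, t') : ℝ × ℝ)) (0, 1) t :=
    (hasDerivAt_const t x).prodMk (hasDerivAt_id t)
  exact (hF.comp_hasDerivAt t hι).deriv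

lemma csm_pdx {f : ℝ → ℝ → ℝ} (hf : ContDiff ℝ (⊤ : ℕ∞) (uncurry f)) :
    ContDiff ℝ (⊤ : ℕ∞) (uncurry (pdx f)) := by
  have h : uncurry (pdx f) = fun p : ℝ × ℝ => fderiv ℝ (uncurry f) p (1, 0) := by
    funext p
    exact pdx_eq_fderiv hf p.1 p.2
  rw [h]
  exact (hf.fderiv_right (by simp)).clm_apply contDiff_const

lemma csm_pdt {f : ℝ → ℝ → ℝ} (hf : ContDiff ℝ (⊤ : ℕ∞) (uncurry f)) :
    ContDiff ℝ (⊤ : ℕ∞) (uncurry (pdt f)) := by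
  have h : uncurry (pdt f) = fun p : ℝ × ℝ => fderiv ℝ (uncurry f) p (0, 1) := by
    funext p
    exact pdt_eq_fderiv hf p.1 p.2
  rw [h]
  exact (hf.fderiv_right (by simp)).clm_apply contDiff_const

lemma pdt_pdx_comm {f : ℝ → ℝ → ℝ} (hf : ContDiff ℝ (⊤ : ℕ∞) (uncurry f)) :
    pdt (pdx f) = pdx (pdt f) := by
  funext x t
  have hd : ∀ p, HasFDerivAt (uncurry f) (fderiv ℝ (uncurry f) p) p :=
    fun p => ((hf.differentiable (by simp)) p).hasFDerivAt
  have h2 : HasFDerivAt (fderiv ℝ (uncurry f))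
      (fderiv ℝ (fderiv ℝ (uncurry f)) (x, t)) (x, t) :=
    (((hf.fderiv_right (m := (⊤ : ℕ∞)) (by simp)).differentiable (by simp)) (x, t)).hasFDerivAt
  have hsymm := second_derivative_symmetric hd h2 ((0 : ℝ), (1 : ℝ)) (1, 0)
  have e1 : pdt (pdx f) x t = fderiv ℝ (fderiv ℝ (uncurry f)) (x, t) (0, 1) (1, 0) := by
    rw [pdt_eq_fderiv (csm_pdx hf) x t]
    have h : uncurry (pdx f) = fun p : ℝ × ℝ => fderiv ℝ (uncurry f) p (1, 0) := by
      funext p; exact pdx_eq_fderiv hf p.1 p.2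
    rw [h]
    have hc : HasFDerivAt (fun p : ℝ × ℝ => fderiv ℝ (uncurry f) p (1, 0))
        ((ContinuousLinearMap.apply ℝ ℝ ((1 : ℝ), (0 : ℝ))).comp
          (fderiv ℝ (fderiv ℝ (uncurry f)) (x, t))) (x, t) :=
      (ContinuousLinearMap.apply ℝ ℝ ((1 : ℝ), (0 : ℝ))).hasFDerivAt.comp (x, t) h2
    rw [hc.fderiv]
    rfl
  have e2 : pdx (pdt f) x t = fderiv ℝ (fderiv ℝ (uncurry f)) (x, t) (1, 0) (0, 1) := by
    rw [pdx_eq_fderiv (csm_pdt hf) x t]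
    have h : uncurry (pdt f) = fun p : ℝ × ℝ => fderiv ℝ (uncurry f) p (0, 1) := by
      funext p; exact pdt_eq_fderiv hf p.1 p.2
    rw [h]
    have hc : HasFDerivAt (fun p : ℝ × ℝ => fderiv ℝ (uncurry f) p (0, 1))
        ((ContinuousLinearMap.apply ℝ ℝ ((0 : ℝ), (1 : ℝ))).comp
          (fderiv ℝ (fderiv ℝ (uncurry f)) (x, t))) (x, t) :=
      (ContinuousLinearMap.apply ℝ ℝ ((0 : ℝ), (1 : ℝ))).hasFDerivAt.comp (x, t) h2
    rw [hc.fderiv]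
    rfl
  rw [e1, e2, hsymm]

/-- Compatibility of the Lax pair `ψ_{xxx} = λ(-u_{xx}+b)ψ`,
`ψ_t = λ⁻¹ψ_{xx} - u ψ_x + u_x ψ` (with a smooth nowhere-vanishing `ψ`)
forces the short-wave DP equation `u_{xxt} - 3b u_x + 3 u_x u_{xx} + u u_{xxx} = 0`. -/
theorem stmt_2 (u : ℝ → ℝ → ℝ) (hu : ContDiff ℝ (⊤ : ℕ∞) (Function.uncurry u))
    (b lam : ℝ) (hlam : lam ≠ 0)
    (ψ : ℝ → ℝ → ℝ) (hψ : ContDiff ℝ (⊤ : ℕ∞) (Function.uncurry ψ))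
    (hψ0 : ∀ x t : ℝ, ψ x t ≠ 0)
    (hlax1 : ∀ x t : ℝ,
      pdx (pdx (pdx ψ)) x t = lam * (-pdx (pdx u) x t + b) * ψ x t)
    (hlax2 : ∀ x t : ℝ,
      pdt ψ x t = lam⁻¹ * pdx (pdx ψ) x t - u x t * pdx ψ x t + pdx u x t * ψ x t) :
    ∀ x t : ℝ,
      pdt (pdx (pdx u)) x t - 3 * b * pdx u x t
        + 3 * pdx u x t * pdx (pdx u) x t
        + u x t * pdx (pdx (pdx u)) x t = 0 := by
  have cψx := csm_pdx hψ
  have cψxx := csm_pdx cψx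
  have cux := csm_pdx hu
  have cuxx := csm_pdx cux
  intro x t
  -- first x-derivative of the time-evolution equation
  have h1 : ∀ a : ℝ, pdx (pdt ψ) a t = b * ψ a t - u a t * pdx (pdx ψ) a t := by
    intro a
    have hfun : (fun x' => pdt ψ x' t) =
        (fun x' => lam⁻¹ * pdx (pdx ψ) x' t - u x' t * pdx ψ x' t + pdx u x' t * ψ x' t) :=
      funext fun a' => hlax2 a' t
    have hD : HasDerivAt
        (fun x' => lam⁻¹ * pdx (pdx ψ) x' t - u x' t * pdx ψ x' t + pdx u x' t * ψ x' t)
        (lam⁻¹ * pdx (pdx (pdx ψ)) a t -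
          (pdx u a t * pdx ψ a t + u a t * pdx (pdx ψ) a t) +
          (pdx (pdx u) a t * ψ a t + pdx u a t * pdx ψ a t)) a :=
      (((hasDerivAt_pdx cψxx a t).const_mul lam⁻¹).sub
        ((hasDerivAt_pdx hu a t).mul (hasDerivAt_pdx cψx a t))).add
        ((hasDerivAt_pdx cux a t).mul (hasDerivAt_pdx hψ a t))
    have e : pdx (pdt ψ) a t = lam⁻¹ * pdx (pdx (pdx ψ)) a t -
          (pdx u a t * pdx ψ a t + u a t * pdx (pdx ψ) a t) +
          (pdx (pdx u) a t * ψ a t + pdx u a t * pdx ψ a t) := by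
      show deriv (fun x' => pdt ψ x' t) a = _
      rw [hfun]; exact hD.deriv
    rw [e, hlax1 a t]
    field_simp
    ring
  -- second x-derivative
  have h2 : ∀ a : ℝ, pdx (pdx (pdt ψ)) a t =
      b * pdx ψ a t - pdx u a t * pdx (pdx ψ) a t
        - lam * u a t * (-pdx (pdx u) a t + b) * ψ a t := by
    intro a
    have hfun : (fun x' => pdx (pdt ψ) x' t) =
        (fun x' => b * ψ x' t - u x' t * pdx (pdx ψ) x' t) :=
      funext fun a' => h1 a'
    have hD : HasDerivAt (fun x' => b * ψ x' t - u x' t * pdx (pdx ψ) x' t)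
        (b * pdx ψ a t - (pdx u a t * pdx (pdx ψ) a t + u a t * pdx (pdx (pdx ψ)) a t)) a :=
      ((hasDerivAt_pdx hψ a t).const_mul b).sub
        ((hasDerivAt_pdx hu a t).mul (hasDerivAt_pdx cψxx a t))
    have e : pdx (pdx (pdt ψ)) a t =
        b * pdx ψ a t - (pdx u a t * pdx (pdx ψ) a t + u a t * pdx (pdx (pdx ψ)) a t) := by
      show deriv (fun x' => pdx (pdt ψ) x' t) a = _
      rw [hfun]; exact hD.deriv
    rw [e, hlax1 a t]
    ring
  -- third x-derivative
  have e3 : pdx (pdx (pdx (pdt ψ))) x t =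
      (b * pdx (pdx ψ) x t -
        (pdx (pdx u) x t * pdx (pdx ψ) x t + pdx u x t * pdx (pdx (pdx ψ)) x t)) -
      ((lam * pdx u x t * (-pdx (pdx u) x t + b) + lam * u x t * -pdx (pdx (pdx u)) x t) * ψ x t
        + lam * u x t * (-pdx (pdx u) x t + b) * pdx ψ x t) := by
    have hfun : (fun x' => pdx (pdx (pdt ψ)) x' t) =
        (fun x' => b * pdx ψ x' t - pdx u x' t * pdx (pdx ψ) x' t
          - lam * u x' t * (-pdx (pdx u) x' t + b) * ψ x' t) :=
      funext fun a' => h2 a'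
    have hD : HasDerivAt
        (fun x' => b * pdx ψ x' t - pdx u x' t * pdx (pdx ψ) x' t
          - lam * u x' t * (-pdx (pdx u) x' t + b) * ψ x' t)
        ((b * pdx (pdx ψ) x t -
          (pdx (pdx u) x t * pdx (pdx ψ) x t + pdx u x t * pdx (pdx (pdx ψ)) x t)) -
        ((lam * pdx u x t * (-pdx (pdx u) x t + b) + lam * u x t * -pdx (pdx (pdx u)) x t) * ψ x t
          + lam * u x t * (-pdx (pdx u) x t + b) * pdx ψ x t)) x :=
      (((hasDerivAt_pdx cψx x t).const_mul b).sub
        ((hasDerivAt_pdx cux x t).mul (hasDerivAt_pdx cψxx x t))).sub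
        (((((hasDerivAt_pdx hu x t).const_mul lam).mul
          (((hasDerivAt_pdx cuxx x t).neg).add_const b)).mul (hasDerivAt_pdx hψ x t)))
    show deriv (fun x' => pdx (pdx (pdt ψ)) x' t) x = _
    rw [hfun]; exact hD.deriv
  rw [hlax1 x t] at e3
  -- time derivative of the third space derivative, via Lax 1
  have e4 : pdt (pdx (pdx (pdx ψ))) x t =
      lam * -pdt (pdx (pdx u)) x t * ψ x t
        + lam * (-pdx (pdx u) x t + b) * pdt ψ x t := by
    have hfun : (fun t' => pdx (pdx (pdx ψ)) x t') =
        (fun t' => lam * (-pdx (pdx u) x t' + b) * ψ x t') :=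
      funext fun s => hlax1 x s
    have hD : HasDerivAt (fun t' => lam * (-pdx (pdx u) x t' + b) * ψ x t')
        (lam * -pdt (pdx (pdx u)) x t * ψ x t
          + lam * (-pdx (pdx u) x t + b) * pdt ψ x t) t :=
      (((((hasDerivAt_pdt cuxx x t).neg).add_const b).const_mul lam).mul
        (hasDerivAt_pdt hψ x t))
    show deriv (fun t' => pdx (pdx (pdx ψ)) x t') t = _
    rw [hfun]; exact hD.deriv
  -- Clairaut
  have c1 := pdt_pdx_comm hψ
  have c2 := pdt_pdx_comm cψx
  have c3 := pdt_pdx_comm cψxx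
  have key : pdt (pdx (pdx (pdx ψ))) x t = pdx (pdx (pdx (pdt ψ))) x t := by
    rw [c3, c2, c1]
  have main := e4.symm.trans (key.trans e3)
  have ψt' : lam * pdt ψ x t =
      pdx (pdx ψ) x t - lam * (u x t * pdx ψ x t) + lam * (pdx u x t * ψ x t) := by
    rw [hlax2 x t]; field_simp
  have h9 : lam * ψ x t *
      (pdt (pdx (pdx u)) x t - 3 * b * pdx u x t
        + 3 * pdx u x t * pdx (pdx u) x t
        + u x t * pdx (pdx (pdx u)) x t) = 0 := by
    linear_combination (-1 : ℝ) * main + (-pdx (pdx u) x t + b) * ψt'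
  exact (mul_eq_zero.mp h9).resolve_left (mul_ne_zero hlam (hψ0 x t))
end
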